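/- arXiv:2510.15475 — 7 statements merged into one kernel-verified Lean document; each statement's English description precedes it below -/
import Mathlib

section
/- The function φ(x) = 1/tanh²(x) − 1/(x·tanh(x)) is strictly increasing on (0, ∞). -/
open Real Set

/-! Writing `tanh = sinh / cosh`, the derivative of the function at `x > 0` is
`(cosh x * sinh x ^ 2 + x * sinh x - 2 * x ^ 2 * cosh x) / (x ^ 2 * sinh x ^ 3)`.
Its numerator is positive because `x ^ 2 + x ^ 4 / 3 < sinh x ^ 2` (Taylor series of `sinh`)
and `(x ^ 2 - x ^ 4 / 3) * cosh x < x * sinh x`. The latter is an equality at `x = 0`, and the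
difference has positive derivative because `sinh x < x * cosh x` (compare the series termwise). -/

namespace Real

theorem add_pow_three_div_six_lt_sinh {x : ℝ} (hx : 0 < x) : x + x ^ 3 / 6 < sinh x := by
  have h := sum_le_hasSum (Finset.range 3) (fun n _ => by positivity) (hasSum_sinh x)
  norm_num [Finset.sum_range_succ, Nat.factorial] at h
  linarith [pow_pos hx 5]

theorem sinh_lt_mul_cosh {x : ℝ} (hx : 0 < x) : sinh x < x * cosh x := by
  refine hasSum_lt (i := 1) (fun n => ?_) ?_ (hasSum_sinh x) ((hasSum_cosh x).mul_left x)
  · rw [pow_succ', mul_div_assoc]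
    gcongr
    omega
  · norm_num [Nat.factorial]
    linarith [pow_pos hx 3]

theorem sub_pow_three_div_three_mul_cosh_lt_sinh {x : ℝ} (hx : 0 < x) :
    (x - x ^ 3 / 3) * cosh x < sinh x := by
  let f := fun y : ℝ => sinh y - (y - y ^ 3 / 3) * cosh y
  have hf : ∀ y, HasDerivAt f (y * (y * cosh y - sinh y) + y ^ 3 / 3 * sinh y) y := fun y => by
    refine ((hasDerivAt_sinh y).sub (((hasDerivAt_id' y).sub
      ((hasDerivAt_pow 3 y).div_const 3)).mul (hasDerivAt_cosh y))).congr_deriv ?_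
    simp only [Pi.sub_apply]
    push_cast
    ring
  have hmono : StrictMonoOn f (Ici 0) := by
    refine strictMonoOn_of_deriv_pos (convex_Ici 0)
      (fun y _ => (hf y).continuousAt.continuousWithinAt) fun y hy => ?_
    rw [interior_Ici, mem_Ioi] at hy
    rw [(hf y).deriv]
    have hgap := sub_pos.2 (sinh_lt_mul_cosh hy)
    have hsinh := sinh_pos_iff.2 hy
    positivity
  simpa [f] using hmono self_mem_Ici hx.le hx

theorem two_mul_sq_mul_cosh_lt_cosh_mul_sinh_sq_add {x : ℝ} (hx : 0 < x) :
    2 * x ^ 2 * cosh x < cosh x * sinh x ^ 2 + x * sinh x := by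
  have hsinh := add_pow_three_div_six_lt_sinh hx
  have hsinh_sq : x ^ 2 + x ^ 4 / 3 < sinh x ^ 2 := by nlinarith [pow_pos hx 3, pow_pos hx 6]
  have hmul_sinh := mul_lt_mul_of_pos_left (sub_pow_three_div_three_mul_cosh_lt_sinh hx) hx
  nlinarith [mul_lt_mul_of_pos_left hsinh_sq (cosh_pos x)]

theorem hasDerivAt_cosh_sq_div_sinh_sq_sub {x : ℝ} (hx : x ≠ 0) :
    HasDerivAt (fun y => cosh y ^ 2 / sinh y ^ 2 - cosh y / (y * sinh y))
      ((cosh x * sinh x ^ 2 + x * sinh x - 2 * x ^ 2 * cosh x) / (x ^ 2 * sinh x ^ 3)) x := by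
  have hs : sinh x ≠ 0 := sinh_ne_zero.2 hx
  refine (((hasDerivAt_cosh x).pow 2).div ((hasDerivAt_sinh x).pow 2) (pow_ne_zero 2 hs)).sub
    ((hasDerivAt_cosh x).div ((hasDerivAt_id' x).mul (hasDerivAt_sinh x)) (mul_ne_zero hx hs))
    |>.congr_deriv ?_
  simp only [Pi.pow_apply, Pi.mul_apply]
  field_simp
  linear_combination (x * sinh x ^ 2 - 2 * x ^ 2 * cosh x * sinh x) * cosh_sq_sub_sinh_sq x

end Real

theorem stmt_3 :
    StrictMonoOn (fun x : ℝ => 1 / Real.tanh x ^ 2 - 1 / (x * Real.tanh x))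
      (Set.Ioi (0 : ℝ)) := by
  have hφ : (fun x : ℝ => 1 / tanh x ^ 2 - 1 / (x * tanh x)) =
      fun x => cosh x ^ 2 / sinh x ^ 2 - cosh x / (x * sinh x) := by
    funext x
    rw [tanh_eq_sinh_div_cosh]
    field_simp
  rw [hφ]
  refine strictMonoOn_of_deriv_pos (convex_Ioi 0)
    (fun x hx => (hasDerivAt_cosh_sq_div_sinh_sq_sub hx.ne').continuousAt.continuousWithinAt)
    fun x hx => ?_
  rw [interior_Ioi, mem_Ioi] at hx
  rw [(hasDerivAt_cosh_sq_div_sinh_sq_sub hx.ne').deriv]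
  have hnum := sub_pos.2 (two_mul_sq_mul_cosh_lt_cosh_mul_sinh_sq_add hx)
  have hsinh := sinh_pos_iff.2 hx
  positivity
end

section
/- For all x > 0, cosh(x)·sinh²(x) + x·sinh(x) − 2x²·cosh(x) > 0. -/
/-!
Write `s = sinh x`, `c = cosh x` and split the expression as `c (s² - x²) + x (s - x c)`.
The Taylor bound `s ≥ x + x³/6` makes the first part at least `c (x⁴/3 + x⁶/36)`, while
`tanh x ≥ x - x³/3` makes the second at least `-c x⁴/3`; what is left is `c x⁶/36 > 0`.
Each of the elementary bounds follows by differentiating the difference of its two sides.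
-/

open Real Set

theorem le_of_hasDerivAt_nonneg {f f' : ℝ → ℝ} {a x : ℝ} (hf : ∀ y, HasDerivAt f (f' y) y)
    (hf' : ∀ y, a < y → 0 ≤ f' y) (hax : a ≤ x) : f a ≤ f x :=
  monotoneOn_of_hasDerivWithinAt_nonneg (convex_Ici a)
    (continuous_iff_continuousAt.2 fun y ↦ (hf y).continuousAt).continuousOn
    (fun y _ ↦ (hf y).hasDerivWithinAt) (by simpa only [interior_Ici, mem_Ioi] using hf')
    self_mem_Ici hax hax

namespace Real

theorem sinh_le_mul_cosh {x : ℝ} (hx : 0 ≤ x) : sinh x ≤ x * cosh x := by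
  have key := le_of_hasDerivAt_nonneg (f := fun y ↦ y * cosh y - sinh y)
    (fun y ↦ ((hasDerivAt_id y).mul (hasDerivAt_cosh y)).sub (hasDerivAt_sinh y))
    (fun y hy ↦ by
      have : 0 ≤ y * sinh y := mul_nonneg hy.le (sinh_nonneg_iff.2 hy.le)
      simp only [id, one_mul]
      linarith) hx
  simp only [zero_mul, sinh_zero, sub_zero] at key
  linarith

theorem one_add_sq_div_two_le_cosh (x : ℝ) : 1 + x ^ 2 / 2 ≤ cosh x := by
  suffices h : ∀ x : ℝ, 0 ≤ x → 1 + x ^ 2 / 2 ≤ cosh x by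
    simpa only [sq_abs, cosh_abs] using h |x| (abs_nonneg x)
  intro x hx
  have key := le_of_hasDerivAt_nonneg (f := fun y ↦ cosh y - y ^ 2 / 2)
    (fun y ↦ (hasDerivAt_cosh y).sub ((hasDerivAt_pow 2 y).div_const 2))
    (fun y hy ↦ by
      have : y ≤ sinh y := self_le_sinh_iff.2 hy.le
      simp only [Nat.cast_ofNat]
      linarith) hx
  simp only [cosh_zero] at key
  linarith

theorem add_pow_three_div_six_le_sinh {x : ℝ} (hx : 0 ≤ x) : x + x ^ 3 / 6 ≤ sinh x := by
  have key := le_of_hasDerivAt_nonneg (f := fun y ↦ sinh y - y ^ 3 / 6 - y)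
    (fun y ↦ ((hasDerivAt_sinh y).sub ((hasDerivAt_pow 3 y).div_const 6)).sub (hasDerivAt_id y))
    (fun y _ ↦ by
      have := one_add_sq_div_two_le_cosh y
      simp only [Nat.cast_ofNat]
      linarith) hx
  simp only [sinh_zero] at key
  linarith

theorem sub_pow_three_div_three_mul_cosh_le_sinh {x : ℝ} (hx : 0 ≤ x) :
    (x - x ^ 3 / 3) * cosh x ≤ sinh x := by
  have key := le_of_hasDerivAt_nonneg (f := fun y ↦ sinh y - (y - y ^ 3 / 3) * cosh y)
    (fun y ↦ (hasDerivAt_sinh y).sub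
      (((hasDerivAt_id y).sub ((hasDerivAt_pow 3 y).div_const 3)).mul (hasDerivAt_cosh y)))
    (fun y hy ↦ by
      -- the derivative is `y² c - (y - y³/3) s ≥ y (y c - s) ≥ 0`
      have hs : 0 ≤ y ^ 3 * sinh y := mul_nonneg (by positivity) (sinh_nonneg_iff.2 hy.le)
      have hsc : y * sinh y ≤ y * (y * cosh y) :=
        mul_le_mul_of_nonneg_left (sinh_le_mul_cosh hy.le) hy.le
      simp only [Pi.sub_apply, id_eq, Nat.cast_ofNat, Nat.reduceSub]
      linarith) hx
  simp only [sinh_zero, cosh_zero] at key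
  linarith

end Real

theorem stmt_4 (x : ℝ) (hx : 0 < x) :
    0 < Real.cosh x * Real.sinh x ^ 2 + x * Real.sinh x - 2 * x ^ 2 * Real.cosh x := by
  have hsinh := add_pow_three_div_six_le_sinh hx.le
  have htanh := mul_le_mul_of_nonneg_left (sub_pow_three_div_three_mul_cosh_le_sinh hx.le) hx.le
  calc 0 < cosh x * (x ^ 6 / 36) := by have := cosh_pos x; positivity
    _ = cosh x * ((x + x ^ 3 / 6) ^ 2 - x ^ 2 - x ^ 4 / 3) := by ring
    _ ≤ cosh x * (sinh x ^ 2 - x ^ 2 - x ^ 4 / 3) := by gcongr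
    _ ≤ _ := by linear_combination htanh
end

section
/- Let ζ < 0 and define φ(z) = (e^z − 1)/z for z ≠ 0, φ(0) = 1. If η ≥ 2/|ζ|, then for all λ ≤ 0, the quantity φ(ηλ)(λ + ζ)(1 − (ηλ/2)φ(ηλ)) lies in the interval [(3/2)ζ, 0]. -/
/-!
Put `z = ηλ ≤ 0`, `p = φ(z)` and `u = e^z`. Since `z p = u - 1`, the quantity equals
`p (λ + ζ) (3 - u) / 2`, which is `≤ 0` because `p > 0`, `λ + ζ < 0` and `u ≤ 1`.
For the lower bound, multiply by `η` and use `ηζ ≤ -2` together with the trapezoidal bound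
`2 φ(z) ≤ 1 + e^z` for `z ≤ 0` (equivalently `tanh t ≥ t` for `t ≤ 0`), which follows from the
monotonicity of `x ↦ 2 (e^x - 1) - x (e^x + 1)`.
-/

/-- The first exponential-integrator function φ(z) = (e^z − 1)/z, φ(0) = 1. -/
noncomputable def phi (z : ℝ) : ℝ := if z = 0 then 1 else (Real.exp z - 1) / z

open Real

lemma one_sub_mul_exp_le_one (x : ℝ) : (1 - x) * exp x ≤ 1 := by
  have h := mul_le_mul_of_nonneg_right (add_one_le_exp (-x)) (exp_pos x).le
  rwa [← exp_add, neg_add_cancel, exp_zero, neg_add_eq_sub] at h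

lemma antitone_two_mul_exp_sub_one_sub_mul_exp_add_one :
    Antitone fun x : ℝ => 2 * (exp x - 1) - x * (exp x + 1) := by
  have hderiv (x : ℝ) : HasDerivAt (fun x : ℝ => 2 * (exp x - 1) - x * (exp x + 1))
      ((1 - x) * exp x - 1) x :=
    ((((hasDerivAt_exp x).sub_const 1).const_mul 2).fun_sub
      ((hasDerivAt_id' x).fun_mul ((hasDerivAt_exp x).add_const 1))).congr_deriv (by ring)
  refine antitone_of_deriv_nonpos (fun x => (hderiv x).differentiableAt) fun x => ?_
  rw [(hderiv x).deriv]
  linarith [one_sub_mul_exp_le_one x]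

lemma mul_exp_add_one_le_two_mul_exp_sub_one {z : ℝ} (hz : z ≤ 0) :
    z * (exp z + 1) ≤ 2 * (exp z - 1) := by
  simpa using antitone_two_mul_exp_sub_one_sub_mul_exp_add_one hz

lemma mul_phi (z : ℝ) : z * phi z = exp z - 1 := by
  unfold phi
  split_ifs with hz
  · simp [hz]
  · exact mul_div_cancel₀ _ hz

lemma phi_pos (z : ℝ) : 0 < phi z := by
  unfold phi
  split_ifs with hz
  · exact one_pos
  · rcases lt_or_gt_of_ne hz with hz | hz
    · exact div_pos_of_neg_of_neg (by linarith [exp_lt_one_iff.mpr hz]) hz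
    · exact div_pos (by linarith [one_lt_exp_iff.mpr hz]) hz

lemma phi_le_one {z : ℝ} (hz : z ≤ 0) : phi z ≤ 1 := by
  rcases hz.lt_or_eq with hz | rfl
  · rw [phi, if_neg hz.ne, div_le_one_of_neg hz]
    linarith [add_one_le_exp z]
  · simp [phi]

lemma two_mul_phi_le_one_add_exp {z : ℝ} (hz : z ≤ 0) : 2 * phi z ≤ 1 + exp z := by
  rcases hz.lt_or_eq with hz | rfl
  · rw [phi, if_neg hz.ne, mul_div_assoc', div_le_iff_of_neg hz]
    linarith [mul_exp_add_one_le_two_mul_exp_sub_one hz.le]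
  · simp [phi]; norm_num

theorem stmt_7 (ζ : ℝ) (hζ : ζ < 0) (η : ℝ) (hη : 2 / |ζ| ≤ η) (lam : ℝ) (hlam : lam ≤ 0) :
    phi (η * lam) * (lam + ζ) * (1 - η * lam / 2 * phi (η * lam)) ∈
      Set.Icc (3 / 2 * ζ) 0 := by
  rw [abs_of_neg hζ] at hη
  have hη_pos : 0 < η := (div_pos two_pos (neg_pos.mpr hζ)).trans_le hη
  have hηζ : η * ζ ≤ -2 := by
    have := (div_le_iff₀ (neg_pos.mpr hζ)).mp hη
    linarith
  set z := η * lam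
  set p := phi z
  have hz : z ≤ 0 := mul_nonpos_of_nonneg_of_nonpos hη_pos.le hlam
  have hp_pos : 0 < p := phi_pos z
  have hp_le : p ≤ 1 := phi_le_one hz
  have hp_trap : 2 * p ≤ 1 + exp z := two_mul_phi_le_one_add_exp hz
  have hu_le : exp z ≤ 1 := exp_le_one_iff.mpr hz
  have hE : p * (lam + ζ) * (1 - z / 2 * p) = p * (lam + ζ) * (3 - exp z) / 2 := by
    linear_combination (-(p * (lam + ζ)) / 2) * mul_phi z
  have hηE : η * (p * (lam + ζ) * (3 - exp z) / 2) =
      (3 - exp z) * (exp z - 1 + p * (η * ζ)) / 2 := by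
    linear_combination (3 - exp z) / 2 * mul_phi z
  rw [hE]
  constructor
  · refine le_of_mul_le_mul_left ?_ hη_pos
    rw [hηE]
    -- with `a = -ηζ ≥ 2`: `(3-u)(u-1) + a (3 - p(3-u)) ≥ (3-u)(u-1) + 6 - (1+u)(3-u) = 2u`
    nlinarith [mul_nonneg (by linarith : (0:ℝ) ≤ -(η * ζ) - 2)
        (by nlinarith : (0:ℝ) ≤ 3 - p * (3 - exp z)),
      mul_nonneg (by linarith : (0:ℝ) ≤ 1 + exp z - 2 * p) (by linarith : (0:ℝ) ≤ 3 - exp z),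
      exp_pos z]
  · have : p * (lam + ζ) ≤ 0 := mul_nonpos_of_nonneg_of_nonpos hp_pos.le (by linarith)
    nlinarith
end

section
/- Let f_F(y) = λy, f_S(y) = ζy with λ, ζ ≤ 0, let f_{η,1}(y) = φ(ηλ)(λ+ζ)y, and let v solve v̇ = λ(v − (η/2)f_{η,1}(y₀)) + ζy₀ with v(0) = y₀. Then the second-order averaged force f_{η,2}(y₀) = (v(η) − y₀)/η equals φ(ηλ)(λ + ζ)(1 − (ηλ/2)φ(ηλ))·y₀. -/
/-!
The modified fast equation is linear with constant forcing, `v' = λ v + b` with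
`b = ζ y₀ − λ (η/2) f_{η,1}(y₀)`. Variation of constants, written with `φ` so that `λ = 0` is not
a separate case, gives `v t = v 0 + t φ(t λ) (λ v 0 + b)`, because `t ↦ t φ(t λ)` has derivative
`exp (t λ) = 1 + t λ φ(t λ)`. At `t = η` this is the claimed formula after expanding `b`.
-/

open Real

theorem one_add_mul_phi (z : ℝ) : 1 + z * phi z = exp z := by
  rcases eq_or_ne z 0 with rfl | hz
  · simp
  · rw [phi, if_neg hz, mul_div_cancel₀ _ hz]
    ring

theorem hasDerivAt_mul_phi_mul (a t : ℝ) :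
    HasDerivAt (fun s => s * phi (s * a)) (exp (t * a)) t := by
  rcases eq_or_ne a 0 with rfl | ha
  · simpa [phi] using hasDerivAt_id' t
  · have hfun : (fun s => s * phi (s * a)) = fun s => (exp (s * a) - 1) / a := by
      funext s
      rw [eq_div_iff ha, ← one_add_mul_phi]
      ring
    rw [hfun]
    simpa [ha] using (((hasDerivAt_mul_const a).exp).sub_const 1).div_const a

theorem eq_exp_mul_of_hasDerivAt {d : ℝ → ℝ} {a : ℝ} (hd : ∀ t, HasDerivAt d (a * d t) t)
    (t : ℝ) : d t = exp (a * t) * d 0 := by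
  have hderiv : ∀ s, HasDerivAt (fun s => exp (-(a * s)) * d s) 0 s := by
    intro s
    have he : HasDerivAt (fun s => exp (-(a * s))) (exp (-(a * s)) * -a) s :=
      ((hasDerivAt_id s).const_mul a).neg.exp.congr_deriv (by simp)
    exact (he.mul (hd s)).congr_deriv (by ring)
  have hconst : exp (-(a * t)) * d t = exp (-(a * 0)) * d 0 :=
    is_const_of_deriv_eq_zero (fun s => (hderiv s).differentiableAt)
      (fun s => (hderiv s).deriv) t 0
  rw [mul_zero, neg_zero, exp_zero, one_mul, exp_neg, inv_mul_eq_iff_eq_mul₀ (exp_ne_zero _)]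
    at hconst
  exact hconst

theorem eq_add_mul_phi_of_hasDerivAt {v : ℝ → ℝ} {a b : ℝ}
    (hv : ∀ t, HasDerivAt v (a * v t + b) t) (t : ℝ) :
    v t = v 0 + t * phi (t * a) * (a * v 0 + b) := by
  set u : ℝ → ℝ := fun s => v 0 + s * phi (s * a) * (a * v 0 + b)
  have hu : ∀ s, HasDerivAt u (a * u s + b) s := by
    intro s
    refine (((hasDerivAt_mul_phi_mul a s).mul_const (a * v 0 + b)).const_add (v 0)).congr_deriv ?_
    rw [← one_add_mul_phi]
    ring
  have hdiff : v t - u t = exp (a * t) * (v 0 - u 0) :=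
    eq_exp_mul_of_hasDerivAt (d := fun s => v s - u s)
      (fun s => ((hv s).sub (hu s)).congr_deriv (by ring)) t
  simp only [u, zero_mul, add_zero, sub_self, mul_zero] at hdiff
  linarith

theorem stmt_11_general (lam ζ : ℝ) (y₀ η : ℝ) (hη : 0 < η)
    (v : ℝ → ℝ) (hv0 : v 0 = y₀)
    (hv : ∀ t, HasDerivAt v
      (lam * (v t - η / 2 * (phi (η * lam) * (lam + ζ) * y₀)) + ζ * y₀) t) :
    (v η - y₀) / η = phi (η * lam) * (lam + ζ) * (1 - η * lam / 2 * phi (η * lam)) * y₀ := by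
  set c := η / 2 * (phi (η * lam) * (lam + ζ) * y₀)
  have hvη : v η = y₀ + η * phi (η * lam) * (lam * y₀ + (ζ * y₀ - lam * c)) := by
    have := eq_add_mul_phi_of_hasDerivAt (b := ζ * y₀ - lam * c)
      (fun t => (hv t).congr_deriv (by ring)) η
    rwa [hv0] at this
  rw [hvη, div_eq_iff hη.ne']
  ring

theorem stmt_11 (lam ζ : ℝ) (hlam : lam ≤ 0) (hζ : ζ ≤ 0) (y₀ η : ℝ) (hη : 0 < η)
    (v : ℝ → ℝ) (hv0 : v 0 = y₀)
    (hv : ∀ t, HasDerivAt v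
      (lam * (v t - η / 2 * (phi (η * lam) * (lam + ζ) * y₀)) + ζ * y₀) t) :
    (v η - y₀) / η = phi (η * lam) * (lam + ζ) * (1 - η * lam / 2 * phi (η * lam)) * y₀ :=
  stmt_11_general lam ζ y₀ η hη v hv0 hv
end

section
/- Define the averaged force f_{η,2} for the ODE ẏ = f_F(y) + f_S(y) via: u solves u̇ = f_F(u) + f_S(y), u(0) = y; f_{η,1}(y) = (u(η) − y)/η; v solves v̇ = f_F(v − (η/2)f_{η,1}(y)) + f_S(y), v(0) = y; f_{η,2}(y) = (v(η) − y)/η. Then for smooth f_F and f_S, f_{η,2}(y) = f(y) + O(η²) as η → 0, where f = f_F + f_S. -/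
open Set Filter Topology

variable {E : Type*} [NormedAddCommGroup E] [NormedSpace ℝ E]

/-- Mean value inequality from 0 to T on `Icc 0 T`. -/
lemma mvt_zero {g g' : ℝ → E} {T C : ℝ} (hT : 0 ≤ T)
    (hg : ∀ t ∈ Icc (0:ℝ) T, HasDerivWithinAt g (g' t) (Icc 0 T) t)
    (hb : ∀ t ∈ Icc (0:ℝ) T, ‖g' t‖ ≤ C) :
    ‖g T - g 0‖ ≤ C * T := by
  have h := (convex_Icc (0:ℝ) T).norm_image_sub_le_of_norm_hasDerivWithin_le hg hb
    (left_mem_Icc.2 hT) (right_mem_Icc.2 hT)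
  simpa [abs_of_nonneg hT] using h

/-- Bootstrap: if whenever the (continuous, vanishing-at-0) quantity stays `≤ 1` up to time `c`
it is actually `≤ 1/2` at `c`, then it stays `≤ 1` on the whole interval. -/
lemma bootstrap_le_one {φ : ℝ → ℝ} {η : ℝ} (hη : 0 < η)
    (hc : ContinuousOn φ (Icc 0 η)) (h0 : φ 0 = 0)
    (key : ∀ c ∈ Icc (0:ℝ) η, (∀ s ∈ Icc (0:ℝ) c, φ s ≤ 1) → φ c ≤ 1/2) :
    ∀ t ∈ Icc (0:ℝ) η, φ t ≤ 1 := by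
  by_contra hcon
  push_neg at hcon
  obtain ⟨t₀, ht₀, ht₀'⟩ := hcon
  set Kset : Set ℝ := Icc 0 η ∩ φ ⁻¹' (Ici (3/4)) with hKdef
  have hKcl : IsClosed Kset := hc.preimage_isClosed_of_isClosed isClosed_Icc isClosed_Ici
  have hKne : Kset.Nonempty := ⟨t₀, ht₀, by simp only [mem_preimage, mem_Ici]; linarith⟩
  have hKbdd : BddBelow Kset := ⟨0, fun x hx => hx.1.1⟩
  set c := sInf Kset with hcdef
  have hcK : c ∈ Kset := hKcl.csInf_mem hKne hKbdd
  have hcIcc : c ∈ Icc 0 η := hcK.1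
  have hc34 : (3/4 : ℝ) ≤ φ c := hcK.2
  have hcpos : 0 < c := by
    rcases lt_or_eq_of_le hcIcc.1 with h | h
    · exact h
    · exfalso; rw [← h] at hc34; rw [h0] at hc34; linarith
  have hlt : ∀ s, 0 ≤ s → s < c → φ s < 3/4 := by
    intro s hs0 hsc
    by_contra hge
    push_neg at hge
    have : s ∈ Kset := ⟨⟨hs0, le_trans hsc.le hcIcc.2⟩, hge⟩
    exact absurd (csInf_le hKbdd this) (not_le.2 hsc)
  have hc34' : φ c ≤ 3/4 := by
    have hsub : Ico (0:ℝ) c ⊆ Icc 0 η := fun x hx => ⟨hx.1, le_trans hx.2.le hcIcc.2⟩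
    have hcw : ContinuousWithinAt φ (Ico 0 c) c := (hc c hcIcc).mono hsub
    have hne : (𝓝[Ico (0:ℝ) c] c).NeBot := by
      rw [← mem_closure_iff_nhdsWithin_neBot, closure_Ico (ne_of_lt hcpos)]
      exact right_mem_Icc.2 hcpos.le
    have hev : ∀ᶠ x in 𝓝[Ico (0:ℝ) c] c, φ x ≤ 3/4 :=
      eventually_nhdsWithin_of_forall (fun x hx => (hlt x hx.1 hx.2).le)
    exact le_of_tendsto hcw hev
  have hall : ∀ s ∈ Icc (0:ℝ) c, φ s ≤ 1 := by
    intro s hs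
    rcases lt_or_eq_of_le hs.2 with h | h
    · linarith [hlt s hs.1 h]
    · rw [h]; linarith
  linarith [key c hcIcc hall]

/-- A solution whose field is bounded by `M` while it stays in the unit ball around `y`
stays in the ball and satisfies `‖X t - y‖ ≤ M t`. -/
lemma invariant_bound {X F : ℝ → E} {y : E} {η M : ℝ}
    (hη : 0 < η) (hM : 1 ≤ M) (hMη : M * η ≤ 1/2)
    (hX0 : X 0 = y)
    (hd : ∀ t ∈ Icc (0:ℝ) η, HasDerivWithinAt X (F t) (Icc 0 η) t)
    (hF : ∀ t ∈ Icc (0:ℝ) η, ‖X t - y‖ ≤ 1 → ‖F t‖ ≤ M) :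
    ∀ t ∈ Icc (0:ℝ) η, ‖X t - y‖ ≤ M * t := by
  have hcont : ContinuousOn (fun t => ‖X t - y‖) (Icc 0 η) := by
    have : ContinuousOn X (Icc 0 η) := fun t ht => (hd t ht).continuousWithinAt
    exact (this.sub continuousOn_const).norm
  have hkey : ∀ c ∈ Icc (0:ℝ) η, (∀ s ∈ Icc (0:ℝ) c, ‖X s - y‖ ≤ 1) → ‖X c - y‖ ≤ M * c := by
    intro c hc hall
    have hsub : Icc (0:ℝ) c ⊆ Icc 0 η := Icc_subset_Icc le_rfl hc.2
    have := mvt_zero hc.1 (fun s hs => (hd s (hsub hs)).mono hsub)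
      (fun s hs => hF s (hsub hs) (hall s hs))
    rwa [hX0] at this
  have hone : ∀ t ∈ Icc (0:ℝ) η, ‖X t - y‖ ≤ 1 := by
    apply bootstrap_le_one hη hcont (by simp [hX0])
    intro c hc hall
    have h1 := hkey c hc hall
    have : M * c ≤ M * η := mul_le_mul_of_nonneg_left hc.2 (by linarith)
    linarith
  intro t ht
  exact hkey t ht (fun s hs => hone s ⟨hs.1, le_trans hs.2 ht.2⟩)

set_option maxHeartbeats 1000000 in
/-- The averaged force `f_{η,2}(y) = (v(η) − y)/η`, where `u` solves
`u̇ = f_F(u) + f_S(y)`, `u(0) = y`, giving `f_{η,1}(y) = (u(η) − y)/η`, and `v` solves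
`v̇ = f_F(v − (η/2) f_{η,1}(y)) + f_S(y)`, `v(0) = y`, is a second-order (in η)
approximation of `f = f_F + f_S`. -/
theorem stmt_12 (n : ℕ) (fF fS : EuclideanSpace ℝ (Fin n) → EuclideanSpace ℝ (Fin n))
    (hfF : ContDiff ℝ (⊤ : ℕ∞) fF) (hfS : ContDiff ℝ (⊤ : ℕ∞) fS)
    (y : EuclideanSpace ℝ (Fin n))
    (u v : ℝ → ℝ → EuclideanSpace ℝ (Fin n))
    (hu0 : ∀ η, 0 < η → u η 0 = y)
    (hu : ∀ η, 0 < η → ∀ t ∈ Set.Icc (0 : ℝ) η,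
      HasDerivWithinAt (u η) (fF (u η t) + fS y) (Set.Icc 0 η) t)
    (hv0 : ∀ η, 0 < η → v η 0 = y)
    (hv : ∀ η, 0 < η → ∀ t ∈ Set.Icc (0 : ℝ) η,
      HasDerivWithinAt (v η)
        (fF (v η t - (η / 2) • ((1 / η) • (u η η - y))) + fS y) (Set.Icc 0 η) t) :
    ∃ C η₀ : ℝ, 0 < C ∧ 0 < η₀ ∧ ∀ η : ℝ, 0 < η → η ≤ η₀ →
      ‖(1 / η) • (v η η - y) - (fF y + fS y)‖ ≤ C * η ^ 2 := by
  classical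
  set A := fderiv ℝ fF with hAdef
  set B : Set (EuclideanSpace ℝ (Fin n)) := Metric.closedBall y 2 with hBdef
  have hBc : IsCompact B := isCompact_closedBall y 2
  have hBconv : Convex ℝ B := convex_closedBall y 2
  have hyB : y ∈ B := Metric.mem_closedBall_self (by norm_num)
  have hdF : Differentiable ℝ fF := hfF.differentiable (by simp)
  have hA : ContDiff ℝ (⊤ : ℕ∞) A := hfF.fderiv_right (by simp)
  -- bound on the field
  obtain ⟨M₀, hM₀⟩ := hBc.exists_bound_of_continuousOn hfF.continuous.continuousOn
  set M : ℝ := |M₀| + ‖fS y‖ + 1 with hMdef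
  have hM1 : 1 ≤ M := by
    have := abs_nonneg M₀; have := norm_nonneg (fS y); rw [hMdef]; linarith
  have hMpos : 0 < M := lt_of_lt_of_le one_pos hM1
  have hMfield : ∀ z ∈ B, ‖fF z + fS y‖ ≤ M := by
    intro z hz
    calc ‖fF z + fS y‖ ≤ ‖fF z‖ + ‖fS y‖ := norm_add_le _ _
      _ ≤ M := by rw [hMdef]; linarith [hM₀ z hz, le_abs_self M₀]
  -- Lipschitz constant for fF on B
  obtain ⟨L₀, hL₀⟩ := hBc.exists_bound_of_continuousOn
    (hfF.continuous_fderiv (by simp)).continuousOn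
  set L : ℝ := |L₀| + 1 with hLdef
  have hL1 : 1 ≤ L := by have := abs_nonneg L₀; rw [hLdef]; linarith
  have hLpos : 0 < L := lt_of_lt_of_le one_pos hL1
  have hLbound : ∀ z ∈ B, ‖A z‖ ≤ L := by
    intro z hz; rw [hLdef]; linarith [hL₀ z hz, le_abs_self L₀]
  have hLip : ∀ a ∈ B, ∀ b ∈ B, ‖fF a - fF b‖ ≤ L * ‖a - b‖ := by
    intro a ha b hb
    exact hBconv.norm_image_sub_le_of_norm_fderiv_le (fun x _ => hdF x) hLbound hb ha
  -- Lipschitz constant for A on B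
  obtain ⟨K₀, hK₀⟩ := hBc.exists_bound_of_continuousOn
    (hA.continuous_fderiv (by simp)).continuousOn
  set Kc : ℝ := |K₀| + 1 with hKdef
  have hKc0 : 0 ≤ Kc := by have := abs_nonneg K₀; rw [hKdef]; linarith
  have hALip : ∀ a ∈ B, ∀ b ∈ B, ‖A a - A b‖ ≤ Kc * ‖a - b‖ := by
    intro a ha b hb
    refine hBconv.norm_image_sub_le_of_norm_fderiv_le
      (fun x _ => (hA.differentiable (by simp)) x) ?_ hb ha
    intro x hx; rw [hKdef]; linarith [hK₀ x hx, le_abs_self K₀]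
  -- second-order Taylor bound on B
  have hTaylor : ∀ a ∈ B, ∀ c ∈ B, ‖fF a - fF c - A c (a - c)‖ ≤ Kc * ‖a - c‖ ^ 2 := by
    intro a ha c hc
    have hseg : segment ℝ c a ⊆ B := hBconv.segment_subset hc ha
    have key := (convex_segment c a).norm_image_sub_le_of_norm_hasFDerivWithin_le'
      (f' := A) (φ := A c) (C := Kc * ‖a - c‖)
      (fun x _ => (hdF x).hasFDerivAt.hasFDerivWithinAt)
      (fun x hx => by
        obtain ⟨t1, t2, ht1, ht2, hsum, rfl⟩ := hx
        have hxc : ‖t1 • c + t2 • a - c‖ ≤ ‖a - c‖ := by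
          have h1 : t1 = 1 - t2 := by linarith
          have : t1 • c + t2 • a - c = t2 • (a - c) := by
            rw [h1, sub_smul, one_smul, smul_sub]; abel
          rw [this, norm_smul, Real.norm_eq_abs, abs_of_nonneg ht2]
          nlinarith [norm_nonneg (a - c)]
        calc ‖A (t1 • c + t2 • a) - A c‖ ≤ Kc * ‖t1 • c + t2 • a - c‖ :=
              hALip _ (hseg ⟨t1, t2, ht1, ht2, hsum, rfl⟩) c hc
          _ ≤ Kc * ‖a - c‖ := mul_le_mul_of_nonneg_left hxc hKc0)
      (left_mem_segment ℝ c a) (right_mem_segment ℝ c a)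
    calc ‖fF a - fF c - A c (a - c)‖ ≤ Kc * ‖a - c‖ * ‖a - c‖ := key
      _ = Kc * ‖a - c‖ ^ 2 := by ring
  clear_value M L Kc
  -- the constants
  refine ⟨2 * Kc * M ^ 2 + 2 * L ^ 2 * M + 1, 1 / (2 * M), by positivity, by positivity, ?_⟩
  intro η hη hηle
  have hMη : M * η ≤ 1 / 2 := by
    rw [le_div_iff₀ (by positivity)] at hηle
    nlinarith
  set fy := fF y + fS y with hfydef
  -- ============ the u part ============
  set U := u η with hUdef
  have hU0 : U 0 = y := hu0 η hη
  have hUbd : ∀ t ∈ Icc (0:ℝ) η, ‖U t - y‖ ≤ M * t := by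
    refine invariant_bound hη hM1 hMη hU0 (hu η hη) ?_
    intro t _ h1
    refine hMfield _ ?_
    rw [hBdef, Metric.mem_closedBall, dist_eq_norm]; linarith
  have hUB : ∀ t ∈ Icc (0:ℝ) η, U t ∈ B := by
    intro t ht
    rw [hBdef, Metric.mem_closedBall, dist_eq_norm]
    have := hUbd t ht
    have : M * t ≤ M * η := mul_le_mul_of_nonneg_left ht.2 hMpos.le
    linarith [hUbd t ht]
  -- first-order expansion of u
  have hg : ‖u η η - y - η • fy‖ ≤ L * M * η * η := by
    have hd : ∀ t ∈ Icc (0:ℝ) η, HasDerivWithinAt (fun t => U t - y - t • fy)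
        ((fF (U t) + fS y) - fy) (Icc 0 η) t := by
      intro t ht
      have h1 : HasDerivAt (fun s : ℝ => s • fy) fy t := by
        simpa using (hasDerivAt_id t).smul_const fy
      exact ((hu η hη t ht).sub_const y).sub h1.hasDerivWithinAt
    have hb : ∀ t ∈ Icc (0:ℝ) η, ‖(fF (U t) + fS y) - fy‖ ≤ L * (M * η) := by
      intro t ht
      have h1 : (fF (U t) + fS y) - fy = fF (U t) - fF y := by
        rw [hfydef]; abel
      rw [h1]
      calc ‖fF (U t) - fF y‖ ≤ L * ‖U t - y‖ := hLip _ (hUB t ht) _ hyB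
        _ ≤ L * (M * η) := by
            refine mul_le_mul_of_nonneg_left ?_ hLpos.le
            calc ‖U t - y‖ ≤ M * t := hUbd t ht
              _ ≤ M * η := mul_le_mul_of_nonneg_left ht.2 hMpos.le
    have h0 : U 0 - y - (0:ℝ) • fy = 0 := by rw [hU0]; simp
    have hM2 := mvt_zero hη.le hd hb
    rw [h0, sub_zero, hUdef] at hM2
    calc ‖u η η - y - η • fy‖ ≤ L * (M * η) * η := hM2
      _ = L * M * η * η := by ring
  have hf1 : ‖(1 / η) • (u η η - y) - fy‖ ≤ L * M * η := by
    have he : (1 / η) • (u η η - y - η • fy) = (1 / η) • (u η η - y) - fy := by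
      rw [smul_sub, smul_smul, show (1 / η) * η = 1 by field_simp, one_smul]
    rw [← he, norm_smul, Real.norm_eq_abs, abs_of_pos (by positivity)]
    calc (1 / η) * ‖u η η - y - η • fy‖ ≤ (1 / η) * (L * M * η * η) := by
          exact mul_le_mul_of_nonneg_left hg (by positivity)
      _ = L * M * η := by field_simp
  have hf1n : ‖(1 / η) • (u η η - y)‖ ≤ M := by
    rw [norm_smul, Real.norm_eq_abs, abs_of_pos (by positivity)]
    have := hUbd η (right_mem_Icc.2 hη.le)
    calc (1 / η) * ‖u η η - y‖ ≤ (1 / η) * (M * η) := by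
          exact mul_le_mul_of_nonneg_left (by simpa [hUdef] using this) (by positivity)
      _ = M := by field_simp
  -- ============ the v part ============
  have hv' := hv η hη
  set w := (η / 2) • ((1 / η) • (u η η - y)) with hwdef
  have hwn : ‖w‖ ≤ M * η / 2 := by
    rw [hwdef, norm_smul, Real.norm_eq_abs, abs_of_pos (by positivity)]
    calc (η / 2) * ‖(1 / η) • (u η η - y)‖ ≤ (η / 2) * M :=
          mul_le_mul_of_nonneg_left hf1n (by positivity)
      _ = M * η / 2 := by ring
  have hwyB : y - w ∈ B := by
    rw [hBdef, Metric.mem_closedBall, dist_eq_norm]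
    have : ‖y - w - y‖ = ‖w‖ := by rw [show y - w - y = -w by abel, norm_neg]
    rw [this]; linarith
  set bb := fF (y - w) + fS y with hbbdef
  set Aw := A (y - w) with hAwdef
  set V := v η with hVdef
  have hV0 : V 0 = y := hv0 η hη
  have hVbd : ∀ t ∈ Icc (0:ℝ) η, ‖V t - y‖ ≤ M * t := by
    refine invariant_bound hη hM1 hMη hV0 hv' ?_
    intro t _ h1
    refine hMfield _ ?_
    rw [hBdef, Metric.mem_closedBall, dist_eq_norm]
    calc ‖V t - w - y‖ ≤ ‖V t - y‖ + ‖w‖ := by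
          rw [show V t - w - y = (V t - y) + (-w) by abel]
          exact (norm_add_le _ _).trans (by rw [norm_neg])
      _ ≤ 2 := by linarith
  have hVwB : ∀ t ∈ Icc (0:ℝ) η, V t - w ∈ B := by
    intro t ht
    rw [hBdef, Metric.mem_closedBall, dist_eq_norm]
    have h1 : ‖V t - y‖ ≤ M * η :=
      (hVbd t ht).trans (mul_le_mul_of_nonneg_left ht.2 hMpos.le)
    calc ‖V t - w - y‖ ≤ ‖V t - y‖ + ‖w‖ := by
          rw [show V t - w - y = (V t - y) + (-w) by abel]
          exact (norm_add_le _ _).trans (by rw [norm_neg])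
      _ ≤ 2 := by linarith
  -- first-order bound for v
  have hq : ∀ t ∈ Icc (0:ℝ) η, ‖V t - y - t • bb‖ ≤ L * (M * η) * t := by
    intro t ht
    have hsub : Icc (0:ℝ) t ⊆ Icc 0 η := Icc_subset_Icc le_rfl ht.2
    have hd : ∀ s ∈ Icc (0:ℝ) t, HasDerivWithinAt (fun s => V s - y - s • bb)
        ((fF (V s - w) + fS y) - bb) (Icc 0 t) s := by
      intro s hs
      have h1 : HasDerivAt (fun r : ℝ => r • bb) bb s := by
        simpa using (hasDerivAt_id s).smul_const bb
      exact (((hv' s (hsub hs)).mono hsub).sub_const y).sub h1.hasDerivWithinAt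
    have hb : ∀ s ∈ Icc (0:ℝ) t, ‖(fF (V s - w) + fS y) - bb‖ ≤ L * (M * η) := by
      intro s hs
      have h1 : (fF (V s - w) + fS y) - bb = fF (V s - w) - fF (y - w) := by
        rw [hbbdef]; abel
      rw [h1]
      have h2 : (V s - w) - (y - w) = V s - y := by abel
      calc ‖fF (V s - w) - fF (y - w)‖ ≤ L * ‖(V s - w) - (y - w)‖ :=
            hLip _ (hVwB s (hsub hs)) _ hwyB
        _ = L * ‖V s - y‖ := by rw [h2]
        _ ≤ L * (M * η) := by
            refine mul_le_mul_of_nonneg_left ?_ hLpos.le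
            calc ‖V s - y‖ ≤ M * s := hVbd s (hsub hs)
              _ ≤ M * η := mul_le_mul_of_nonneg_left (hsub hs).2 hMpos.le
    have := mvt_zero ht.1 hd hb
    have h0 : V 0 - y - (0:ℝ) • bb = 0 := by rw [hV0]; simp
    rw [h0, sub_zero] at this
    exact this
  -- second-order bound for v
  have hh : ‖V η - y - η • bb - (η ^ 2 / 2) • Aw bb‖ ≤ (Kc * M ^ 2 + L ^ 2 * M) * η ^ 2 * η := by
    have hd : ∀ t ∈ Icc (0:ℝ) η, HasDerivWithinAt
        (fun t => V t - y - t • bb - (t ^ 2 / 2) • Aw bb)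
        (((fF (V t - w) + fS y) - bb) - t • Aw bb) (Icc 0 η) t := by
      intro t ht
      have h1 : HasDerivAt (fun r : ℝ => r • bb) bb t := by
        simpa using (hasDerivAt_id t).smul_const bb
      have h2 : HasDerivAt (fun r : ℝ => (r ^ 2 / 2) • Aw bb) (t • Aw bb) t := by
        have h3 : HasDerivAt (fun r : ℝ => r ^ 2 / 2) t t := by
          have := (hasDerivAt_pow 2 t).div_const 2
          norm_num at this
          exact this
        simpa using h3.smul_const (Aw bb)
      exact (((hv' t ht).sub_const y).sub h1.hasDerivWithinAt).sub h2.hasDerivWithinAt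
    have hb : ∀ t ∈ Icc (0:ℝ) η, ‖((fF (V t - w) + fS y) - bb) - t • Aw bb‖ ≤
        (Kc * M ^ 2 + L ^ 2 * M) * η ^ 2 := by
      intro t ht
      have hVtη : ‖V t - y‖ ≤ M * η :=
        (hVbd t ht).trans (mul_le_mul_of_nonneg_left ht.2 hMpos.le)
      have hdecomp : ((fF (V t - w) + fS y) - bb) - t • Aw bb =
          (fF (V t - w) - fF (y - w) - Aw (V t - y))
            + Aw (V t - y - t • bb) := by
        have hAw1 : Aw (V t - y - t • bb) = Aw (V t - y) - t • Aw bb := by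
          rw [map_sub, map_smul]
        rw [hAw1, hbbdef]; abel
      have e1 : ‖fF (V t - w) - fF (y - w) - Aw (V t - y)‖ ≤
          Kc * (M * η) ^ 2 := by
        have h2 : (V t - w) - (y - w) = V t - y := by abel
        have htay := hTaylor (V t - w) (hVwB t ht) (y - w) hwyB
        rw [h2] at htay
        refine htay.trans ?_
        exact mul_le_mul_of_nonneg_left (by nlinarith [norm_nonneg (V t - y)]) hKc0
      have e2 : ‖Aw (V t - y - t • bb)‖ ≤ L * (L * (M * η) * η) := by
        calc ‖Aw (V t - y - t • bb)‖ ≤ ‖Aw‖ * ‖V t - y - t • bb‖ :=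
              Aw.le_opNorm _
          _ ≤ L * (L * (M * η) * η) := by
              refine mul_le_mul (hLbound _ hwyB) ?_ (norm_nonneg _) hLpos.le
              refine (hq t ht).trans ?_
              exact mul_le_mul_of_nonneg_left ht.2 (by positivity)
      calc ‖((fF (V t - w) + fS y) - bb) - t • Aw bb‖ ≤
            ‖fF (V t - w) - fF (y - w) - Aw (V t - y)‖
              + ‖Aw (V t - y - t • bb)‖ := by rw [hdecomp]; exact norm_add_le _ _
        _ ≤ Kc * (M * η) ^ 2 + L * (L * (M * η) * η) := add_le_add e1 e2
        _ = (Kc * M ^ 2 + L ^ 2 * M) * η ^ 2 := by ring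
    have := mvt_zero hη.le hd hb
    have h0 : V 0 - y - (0:ℝ) • bb - ((0:ℝ) ^ 2 / 2) • Aw bb = 0 := by rw [hV0]; simp
    rw [h0, sub_zero] at this
    exact this
  -- ============ assembly ============
  set f₁ := (1 / η) • (u η η - y) with hf₁def
  have hAyw : (A y) w = (η / 2) • ((A y) f₁) := by rw [hwdef, map_smul]
  have hident : (1 / η) • (V η - y) - fy =
      (fF (y - w) - fF y + (A y) w)
        + (η / 2) • (Aw bb - (A y) f₁)
        + (1 / η) • (V η - y - η • bb - (η ^ 2 / 2) • Aw bb) := by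
    have e1 : (1 / η) * η = 1 := by field_simp
    have e2 : (1 / η) * (η ^ 2 / 2) = η / 2 := by field_simp
    have hT3eq : (1 / η) • (V η - y - η • bb - (η ^ 2 / 2) • Aw bb)
        = (1 / η) • (V η - y) - bb - (η / 2) • Aw bb := by
      rw [smul_sub, smul_sub, smul_smul, smul_smul, e1, e2, one_smul]
    have hT2eq : (η / 2) • (Aw bb - (A y) f₁) = (η / 2) • Aw bb - (A y) w := by
      rw [smul_sub, ← hAyw]
    rw [hT3eq, hT2eq, hbbdef, hfydef]
    abel
  -- bound the three terms
  have hT1 : ‖fF (y - w) - fF y + (A y) w‖ ≤ Kc * (M * η / 2) ^ 2 := by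
    have := hTaylor (y - w) hwyB y hyB
    have h2 : (y - w) - y = -w := by abel
    rw [h2, map_neg, sub_neg_eq_add, norm_neg] at this
    refine this.trans ?_
    exact mul_le_mul_of_nonneg_left (by nlinarith [norm_nonneg w]) hKc0
  have hbbn : ‖bb‖ ≤ M := hMfield _ hwyB
  have hT2 : ‖Aw bb - (A y) f₁‖ ≤ Kc * (M * η / 2) * M + L * (L * (M * η / 2) + L * M * η) := by
    have h2a : ‖Aw bb - (A y) bb‖ ≤ Kc * (M * η / 2) * M := by
      calc ‖Aw bb - (A y) bb‖ = ‖(Aw - A y) bb‖ := by rw [ContinuousLinearMap.sub_apply]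
        _ ≤ ‖Aw - A y‖ * ‖bb‖ := (Aw - A y).le_opNorm _
        _ ≤ (Kc * (M * η / 2)) * M := by
            refine mul_le_mul ?_ hbbn (norm_nonneg _) (by positivity)
            refine (hALip _ hwyB _ hyB).trans ?_
            have h2 : (y - w) - y = -w := by abel
            rw [h2, norm_neg]
            exact mul_le_mul_of_nonneg_left hwn hKc0
        _ = Kc * (M * η / 2) * M := by ring
    have h2b : ‖(A y) bb - (A y) f₁‖ ≤ L * (L * (M * η / 2) + L * M * η) := by
      calc ‖(A y) bb - (A y) f₁‖ = ‖(A y) (bb - f₁)‖ := by rw [map_sub]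
        _ ≤ ‖A y‖ * ‖bb - f₁‖ := (A y).le_opNorm _
        _ ≤ L * (L * (M * η / 2) + L * M * η) := by
            refine mul_le_mul (hLbound _ hyB) ?_ (norm_nonneg _) hLpos.le
            have hsplit : bb - f₁ = (fF (y - w) - fF y) + (fy - f₁) := by
              rw [hbbdef, hfydef]; abel
            calc ‖bb - f₁‖ ≤ ‖fF (y - w) - fF y‖ + ‖fy - f₁‖ := by
                  rw [hsplit]; exact norm_add_le _ _
              _ ≤ L * (M * η / 2) + L * M * η := by
                  have hx1 : ‖fF (y - w) - fF y‖ ≤ L * (M * η / 2) := by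
                    refine (hLip _ hwyB _ hyB).trans ?_
                    have h2 : (y - w) - y = -w := by abel
                    rw [h2, norm_neg]
                    exact mul_le_mul_of_nonneg_left hwn hLpos.le
                  have hx2 : ‖fy - f₁‖ ≤ L * M * η := by
                    rw [norm_sub_rev]; exact hf1
                  linarith
    calc ‖Aw bb - (A y) f₁‖ ≤ ‖Aw bb - (A y) bb‖ + ‖(A y) bb - (A y) f₁‖ := by
          rw [show Aw bb - (A y) f₁ = (Aw bb - (A y) bb) + ((A y) bb - (A y) f₁) by abel]
          exact norm_add_le _ _
      _ ≤ Kc * (M * η / 2) * M + L * (L * (M * η / 2) + L * M * η) := add_le_add h2a h2b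
  -- final estimate
  rw [hident]
  have hfinal := calc
    ‖(fF (y - w) - fF y + (A y) w) + (η / 2) • (Aw bb - (A y) f₁)
        + (1 / η) • (V η - y - η • bb - (η ^ 2 / 2) • Aw bb)‖
      ≤ ‖fF (y - w) - fF y + (A y) w‖ + ‖(η / 2) • (Aw bb - (A y) f₁)‖
        + ‖(1 / η) • (V η - y - η • bb - (η ^ 2 / 2) • Aw bb)‖ :=
        norm_add₃_le
    _ ≤ Kc * (M * η / 2) ^ 2
        + (η / 2) * (Kc * (M * η / 2) * M + L * (L * (M * η / 2) + L * M * η))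
        + (1 / η) * ((Kc * M ^ 2 + L ^ 2 * M) * η ^ 2 * η) := by
        refine add_le_add (add_le_add hT1 ?_) ?_
        · rw [norm_smul, Real.norm_eq_abs, abs_of_pos (by positivity)]
          exact mul_le_mul_of_nonneg_left hT2 (by positivity)
        · rw [norm_smul, Real.norm_eq_abs, abs_of_pos (by positivity)]
          exact mul_le_mul_of_nonneg_left hh (by positivity)
  refine hfinal.trans ?_
  have he3 : (1 / η) * ((Kc * M ^ 2 + L ^ 2 * M) * η ^ 2 * η) =
      (Kc * M ^ 2 + L ^ 2 * M) * η ^ 2 := by field_simp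
  rw [he3]
  have hKM : 0 ≤ Kc * M ^ 2 * η ^ 2 := by positivity
  have hLM : 0 ≤ L ^ 2 * M * η ^ 2 := by positivity
  nlinarith [sq_nonneg η, sq_nonneg M, hKc0, hLpos.le, hMpos.le, hη.le]
end

section
/- Let T_m denote the Chebyshev polynomial of the first kind of degree m. For ω₀ > 1 and x = m·arccosh(ω₀), the quantity α_m = T_m(ω₀)T_m''(ω₀)/T_m'(ω₀)² equals (1/tanh(x))·(1/tanh(x) − (1/x)·(ω₀/√(ω₀²−1))·arccosh(ω₀)). -/
/-!
Write `ω₀ = cosh θ`. Then `T_m (cosh θ) = cosh (m θ)`, the identity `T_m' = m U_{m-1}`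
gives `T_m' (cosh θ) sinh θ = m sinh (m θ)`, and Chebyshev's equation
`(1 - x²) T_m'' = x T_m' - m² T_m` expresses `T_m'' (cosh θ) sinh² θ` through these two,
so the quotient is a rational expression in `cosh (m θ)`, `sinh (m θ)`, `cosh θ`, `sinh θ`.
-/

open Polynomial Polynomial.Chebyshev

/-- Inverse hyperbolic cosine. -/
noncomputable def arcosh (x : ℝ) : ℝ := Real.log (x + Real.sqrt (x ^ 2 - 1))

namespace Polynomial.Chebyshev

open Real

variable (n : ℤ) (θ : ℝ)

theorem derivative_T_real_cosh_mul_sinh :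
    (derivative (T ℝ n)).eval (cosh θ) * sinh θ = n * sinh (n * θ) := by
  have hU := U_real_cosh θ (n - 1)
  rw [Int.cast_sub, Int.cast_one, sub_add_cancel] at hU
  rw [T_derivative_eq_U, eval_mul, eval_intCast, mul_assoc, hU]

theorem derivative_derivative_T_real_cosh_mul_sinh_sq :
    (derivative (derivative (T ℝ n))).eval (cosh θ) * sinh θ ^ 2 =
      n ^ 2 * cosh (n * θ) - cosh θ * (derivative (T ℝ n)).eval (cosh θ) := by
  have hODE := congr_arg (eval (cosh θ))
    (one_sub_X_sq_mul_derivative_derivative_T_eq_poly_in_T (R := ℝ) n)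
  simp only [Function.iterate_succ, Function.iterate_zero, Function.comp_apply, Function.id_comp,
    eval_mul, eval_sub, eval_one, eval_pow, eval_X, eval_intCast, T_real_cosh] at hODE
  linear_combination
    -hODE - (derivative (derivative (T ℝ n))).eval (cosh θ) * cosh_sq_sub_sinh_sq θ

theorem T_mul_derivative_derivative_div_derivative_sq_real_cosh (hn : n ≠ 0) (hθ : θ ≠ 0) :
    (T ℝ n).eval (cosh θ) * (derivative (derivative (T ℝ n))).eval (cosh θ) /
        ((derivative (T ℝ n)).eval (cosh θ)) ^ 2 =
      1 / tanh (n * θ) * (1 / tanh (n * θ) - cosh θ / (n * sinh θ)) := by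
  have hn' : (n : ℝ) ≠ 0 := Int.cast_ne_zero.mpr hn
  have hsinh : sinh θ ≠ 0 := sinh_ne_zero.mpr hθ
  have hsinh_n : sinh (n * θ) ≠ 0 := sinh_ne_zero.mpr (mul_ne_zero hn' hθ)
  have hT' : (derivative (T ℝ n)).eval (cosh θ) = n * sinh (n * θ) / sinh θ := by
    rw [← derivative_T_real_cosh_mul_sinh, mul_div_cancel_right₀ _ hsinh]
  have hT'' : (derivative (derivative (T ℝ n))).eval (cosh θ) =
      (n ^ 2 * cosh (n * θ) - cosh θ * (n * sinh (n * θ) / sinh θ)) / sinh θ ^ 2 := by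
    rw [← hT', ← derivative_derivative_T_real_cosh_mul_sinh_sq,
      mul_div_cancel_right₀ _ (pow_ne_zero 2 hsinh)]
  rw [T_real_cosh, hT', hT'', tanh_eq_sinh_div_cosh]
  field_simp

end Polynomial.Chebyshev

theorem stmt_14 (m : ℕ) (hm : 0 < m) (ω₀ : ℝ) (h : 1 < ω₀) :
    (T ℝ m).eval ω₀ * (derivative (derivative (T ℝ m))).eval ω₀ /
        ((derivative (T ℝ m)).eval ω₀) ^ 2 =
      (1 / Real.tanh (m * arcosh ω₀)) *
        (1 / Real.tanh (m * arcosh ω₀) -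
          1 / (m * arcosh ω₀) * (ω₀ / Real.sqrt (ω₀ ^ 2 - 1)) * arcosh ω₀) := by
  -- the local `arcosh` is definitionally Mathlib's `Real.arcosh`
  have hθ : 0 < arcosh ω₀ := Real.arcosh_pos h
  have hcosh : Real.cosh (arcosh ω₀) = ω₀ := Real.cosh_arcosh h.le
  have hsinh : Real.sinh (arcosh ω₀) = Real.sqrt (ω₀ ^ 2 - 1) := Real.sinh_arcosh h.le
  have key := T_mul_derivative_derivative_div_derivative_sq_real_cosh m (arcosh ω₀)
    (by exact_mod_cast hm.ne') hθ.ne'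
  rw [hcosh, hsinh] at key
  push_cast at key
  rw [key]
  field_simp
end

section
/- For fixed ε > 0, with ω₀ = 1 + ε/m² and α_m(ε) = T_m(ω₀)T_m''(ω₀)/T_m'(ω₀)², the limit as m → ∞ of α_m(ε) equals (1/tanh(√(2ε)))·(1/tanh(√(2ε)) − 1/√(2ε)). -/
/-!
With ω₀ = cosh t, the Chebyshev polynomial and its derivatives become hyperbolic functions of
m t (the derivatives via `T_m' = m U_{m-1}` and Chebyshev's differential equation), giving
α_m(ε) = coth(m t) (coth(m t) - 1 / (m tanh t)). The half-angle formula
cosh (2 a) = 1 + 2 sinh² a makes t = 2 arsinh (√(ε/2) / m) the right choice; since arsinh and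
sinh are tangent to the identity at 0, both m t and m tanh t tend to 2 √(ε/2) = √(2ε).
-/

open Polynomial Polynomial.Chebyshev

/-- `α_m(ε) = T_m(ω₀) T_m''(ω₀) / T_m'(ω₀)²` with `ω₀ = 1 + ε/m²`. -/
noncomputable def alpha (m : ℕ) (ε : ℝ) : ℝ :=
  (T ℝ m).eval (1 + ε / (m : ℝ) ^ 2) *
      (derivative (derivative (T ℝ m))).eval (1 + ε / (m : ℝ) ^ 2) /
    ((derivative (T ℝ m)).eval (1 + ε / (m : ℝ) ^ 2)) ^ 2

open Filter Topology Asymptotics Real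

theorem HasDerivAt.tendsto_mul_comp {α : Type*} {l : Filter α} {f : ℝ → ℝ}
    {f' L : ℝ} {g u : α → ℝ} (hf : HasDerivAt f f' 0) (hf0 : f 0 = 0)
    (hu : Tendsto u l (𝓝 0)) (hgu : Tendsto (fun x => g x * u x) l (𝓝 L)) :
    Tendsto (fun x => g x * f (u x)) l (𝓝 (f' * L)) := by
  have hlin : (fun x => f (u x) - f' * u x) =o[l] u := by
    simpa [Function.comp_def, hf0, mul_comm] using hf.isLittleO.comp_tendsto hu
  have herr : Tendsto (fun x => g x * (f (u x) - f' * u x)) l (𝓝 0) :=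
    (isLittleO_one_iff ℝ).1
      (((isBigO_refl g l).mul_isLittleO hlin).trans_isBigO (hgu.isBigO_one ℝ))
  simpa [mul_sub, mul_left_comm] using herr.add (hgu.const_mul f')

theorem continuous_tanh : Continuous tanh := by
  rw [show tanh = fun x => sinh x / cosh x from funext tanh_eq_sinh_div_cosh]
  exact continuous_sinh.div continuous_cosh fun x => (cosh_pos x).ne'

theorem derivative_T_eval_cosh_mul_sinh (n : ℤ) (t : ℝ) :
    (derivative (T ℝ n)).eval (cosh t) * sinh t = n * sinh (n * t) := by
  rw [T_derivative_eq_U, eval_mul, eval_intCast, mul_assoc, U_real_cosh]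
  push_cast; ring_nf

theorem sinh_sq_mul_derivative_derivative_T_eval_cosh (n : ℤ) (t : ℝ) :
    sinh t ^ 2 * (derivative (derivative (T ℝ n))).eval (cosh t) =
      n ^ 2 * cosh (n * t) - cosh t * (derivative (T ℝ n)).eval (cosh t) := by
  have h := congr_arg (eval (cosh t))
    (one_sub_X_sq_mul_derivative_derivative_T_eq_poly_in_T (R := ℝ) n)
  simp only [Function.iterate_succ, Function.iterate_zero, Function.comp_apply, id_eq, eval_mul,
    eval_sub, eval_one, eval_pow, eval_X, eval_intCast, T_real_cosh] at h
  linear_combination -h - (derivative (derivative (T ℝ n))).eval (cosh t) * cosh_sq t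

theorem T_mul_derivative_derivative_T_div_sq_eval_cosh {n : ℤ} (hn : n ≠ 0) {t : ℝ}
    (ht : t ≠ 0) :
    (T ℝ n).eval (cosh t) * (derivative (derivative (T ℝ n))).eval (cosh t) /
        (derivative (T ℝ n)).eval (cosh t) ^ 2 =
      1 / tanh (n * t) * (1 / tanh (n * t) - 1 / (n * tanh t)) := by
  have hs : sinh t ≠ 0 := sinh_ne_zero.2 ht
  have hns : sinh (n * t) ≠ 0 := sinh_ne_zero.2 (mul_ne_zero (Int.cast_ne_zero.2 hn) ht)
  have h1 : (derivative (T ℝ n)).eval (cosh t) = n * sinh (n * t) / sinh t := by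
    rw [eq_div_iff hs, derivative_T_eval_cosh_mul_sinh]
  have h2 : (derivative (derivative (T ℝ n))).eval (cosh t) =
      (n ^ 2 * cosh (n * t) - cosh t * (n * sinh (n * t) / sinh t)) / sinh t ^ 2 := by
    rw [eq_div_iff (pow_ne_zero 2 hs), mul_comm, sinh_sq_mul_derivative_derivative_T_eval_cosh, h1]
  rw [h1, h2, T_real_cosh, tanh_eq_sinh_div_cosh, tanh_eq_sinh_div_cosh]
  have : (n : ℝ) ≠ 0 := Int.cast_ne_zero.2 hn
  field_simp

theorem cosh_two_mul_arsinh (y : ℝ) : cosh (2 * arsinh y) = 1 + 2 * y ^ 2 := by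
  rw [cosh_two_mul, cosh_sq, sinh_arsinh]
  ring

theorem tendsto_natCast_mul_two_mul_arsinh_div (c : ℝ) :
    Tendsto (fun m : ℕ => (m : ℝ) * (2 * arsinh (c / m))) atTop (𝓝 (2 * c)) := by
  have hf : HasDerivAt (fun y => 2 * arsinh y) 2 0 := by
    simpa using (hasDerivAt_arsinh 0).const_mul 2
  have hgu : Tendsto (fun m : ℕ => (m : ℝ) * (c / m)) atTop (𝓝 c) := by
    refine tendsto_const_nhds.congr' ?_
    filter_upwards [eventually_ne_atTop 0] with m hm
    field_simp
  simpa using hf.tendsto_mul_comp (by simp) (tendsto_const_div_atTop_nhds_zero_nat c) hgu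

theorem tendsto_natCast_mul_tanh_two_mul_arsinh_div (c : ℝ) :
    Tendsto (fun m : ℕ => (m : ℝ) * tanh (2 * arsinh (c / m))) atTop (𝓝 (2 * c)) := by
  have ht : Tendsto (fun m : ℕ => 2 * arsinh (c / m)) atTop (𝓝 0) := by
    simpa using (tendsto_const_div_atTop_nhds_zero_nat c).arsinh.const_mul 2
  have hsinh := (hasDerivAt_sinh 0).tendsto_mul_comp sinh_zero ht
    (tendsto_natCast_mul_two_mul_arsinh_div c)
  have hcosh := (continuous_cosh.tendsto 0).comp ht
  simpa [tanh_eq_sinh_div_cosh, mul_div_assoc, Function.comp_def, Pi.div_def] using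
    hsinh.div hcosh (cosh_pos 0).ne'

theorem stmt_16 (ε : ℝ) (hε : 0 < ε) :
    Filter.Tendsto (fun m : ℕ => alpha m ε) Filter.atTop
      (nhds ((1 / Real.tanh (Real.sqrt (2 * ε))) *
        (1 / Real.tanh (Real.sqrt (2 * ε)) - 1 / Real.sqrt (2 * ε)))) := by
  set s := √(2 * ε)
  have hs : 0 < s := sqrt_pos.2 (by positivity)
  have hc : 2 * √(ε / 2) = s := by
    rw [show s = √(2 * ε) from rfl, show 2 * ε = 2 ^ 2 * (ε / 2) by ring,
      sqrt_mul (by positivity), sqrt_sq zero_le_two]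
  set t : ℕ → ℝ := fun m => 2 * arsinh (√(ε / 2) / m)
  have hmt : Tendsto (fun m : ℕ => (m : ℝ) * t m) atTop (𝓝 s) :=
    hc ▸ tendsto_natCast_mul_two_mul_arsinh_div _
  have hmtanh : Tendsto (fun m : ℕ => (m : ℝ) * tanh (t m)) atTop (𝓝 s) :=
    hc ▸ tendsto_natCast_mul_tanh_two_mul_arsinh_div _
  have hcoth := tendsto_const_nhds (x := (1 : ℝ)).div ((continuous_tanh.tendsto s).comp hmt)
    (by rw [tanh_eq_sinh_div_cosh]; exact (div_pos (sinh_pos_iff.2 hs) (cosh_pos s)).ne')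
  refine (hcoth.mul (hcoth.sub (tendsto_const_nhds.div hmtanh hs.ne'))).congr' ?_
  filter_upwards [eventually_ne_atTop 0] with m hm
  have hcosh : cosh (t m) = 1 + ε / (m : ℝ) ^ 2 := by
    rw [cosh_two_mul_arsinh, div_pow, sq_sqrt (by positivity)]
    ring
  have htm : t m ≠ 0 := by
    have : 0 < arsinh (√(ε / 2) / m) := arsinh_pos_iff.2 (by positivity)
    positivity
  have := T_mul_derivative_derivative_T_div_sq_eval_cosh (n := m) (Nat.cast_ne_zero.2 hm) htm
  push_cast at this
  rw [alpha, ← hcosh, this]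
  rfl
end
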